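/- The matrix P defined in block form by P = [[I_{n-1} - xᵀx/(1 - x_n), xᵀ], [x, x_n]], where (x, x_n) ∈ ℝ^{n-1} × ℝ is a unit vector (|x|² + x_n² = 1) with x_n ≠ 1, is an orthogonal n × n matrix. -/
import Mathlib


open Matrix

/-- The block matrix
`P = [[I_{n-1} - xᵀx/(1 - xₙ), xᵀ], [x, xₙ]]`, where `(x, xₙ) ∈ ℝ^{n-1} × ℝ`
is a unit vector with `xₙ ≠ 1`, is an orthogonal matrix (`Pᵀ * P = 1`).
We index the `n×n` matrix by `Fin (n-1) ⊕ Unit`. -/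
theorem sphere_chart_matrix_orthogonal (n : ℕ) (hn : 1 ≤ n)
    (x : Fin (n - 1) → ℝ) (xn : ℝ)
    (hunit : ∑ i, x i ^ 2 + xn ^ 2 = 1) (hxn : xn ≠ 1)
    (P : Matrix (Fin (n - 1) ⊕ Unit) (Fin (n - 1) ⊕ Unit) ℝ)
    (hP : P = Matrix.fromBlocks
      ((1 : Matrix (Fin (n - 1)) (Fin (n - 1)) ℝ) -
        Matrix.of (fun i j => x i * x j / (1 - xn)))
      (Matrix.of (fun i (_ : Unit) => x i))
      (Matrix.of (fun (_ : Unit) j => x j))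
      (Matrix.of (fun (_ : Unit) (_ : Unit) => xn))) :
    Pᵀ * P = 1 := by
  subst hP
  have hc : (1 : ℝ) - xn ≠ 0 := sub_ne_zero.mpr (Ne.symm hxn)
  have hs : ∑ i, x i ^ 2 = (1 - xn) * (1 + xn) := by nlinarith [hunit]
  rw [Matrix.fromBlocks_transpose, Matrix.fromBlocks_multiply, ← Matrix.fromBlocks_one]
  ext i j
  rcases i with i | _ <;> rcases j with j | _ <;>
    simp only [Matrix.fromBlocks_apply₁₁, Matrix.fromBlocks_apply₁₂, Matrix.fromBlocks_apply₂₁,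
      Matrix.fromBlocks_apply₂₂, Matrix.add_apply, Matrix.mul_apply, Matrix.transpose_apply,
      Matrix.sub_apply, Matrix.one_apply, Matrix.of_apply, Finset.univ_unique,
      Finset.sum_singleton, Matrix.zero_apply]
  · -- block (1,1)
    have e : ∀ k, ((if k = i then (1:ℝ) else 0) - x k * x i / (1 - xn)) *
          ((if k = j then 1 else 0) - x k * x j / (1 - xn))
        = (if k = i then (1:ℝ) else 0) * (if k = j then 1 else 0)
          - (if k = i then (1:ℝ) else 0) * (x k * x j / (1 - xn))
          - (x k * x i / (1 - xn)) * (if k = j then 1 else 0)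
          + x k ^ 2 * (x i / (1 - xn) * (x j / (1 - xn))) := by
      intro k; ring
    simp only [e, Finset.sum_add_distrib, Finset.sum_sub_distrib, ← Finset.sum_mul,
      ite_mul, one_mul, zero_mul, mul_ite, mul_one, mul_zero, Finset.sum_ite_eq',
      Finset.sum_ite_eq, Finset.mem_univ, if_true, hs]
    rcases eq_or_ne i j with h | h
    · simp [h]; field_simp; ring
    · simp [h, Ne.symm h]; field_simp; ring
  · -- block (1,2)
    have e : ∀ k, ((if k = i then (1:ℝ) else 0) - x k * x i / (1 - xn)) * x k
        = (if k = i then (1:ℝ) else 0) * x k - x k ^ 2 * (x i / (1 - xn)) := by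
      intro k; ring
    simp only [e, Finset.sum_sub_distrib, ← Finset.sum_mul, ite_mul, one_mul, zero_mul,
      Finset.sum_ite_eq', Finset.sum_ite_eq, Finset.mem_univ, if_true, hs]
    field_simp; ring
  · -- block (2,1)
    have e : ∀ k, x k * ((if k = j then (1:ℝ) else 0) - x k * x j / (1 - xn))
        = x k * (if k = j then (1:ℝ) else 0) - x k ^ 2 * (x j / (1 - xn)) := by
      intro k; ring
    simp only [e, Finset.sum_sub_distrib, ← Finset.sum_mul, mul_ite, mul_one, mul_zero,
      Finset.sum_ite_eq', Finset.sum_ite_eq, Finset.mem_univ, if_true, hs]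
    field_simp; ring
  · -- block (2,2)
    have e : ∀ k, x k * x k = x k ^ 2 := fun k => (sq (x k)).symm
    simp only [e, hs, if_pos trivial]
    nlinarith [hunit]
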